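/- Define S(x,y) := (1/√(2π)) e^{-(x-y)²/2}, D(x,y) := -((x-y)/√(2π)) e^{-(x-y)²/2}, and Ĩ(x,y) := -(1/2) erf((x-y)/√2) + (1/2) sgn(x-y). Then for every R ≥ 0, √(2/π) · R - ∫_{-R}^{R} ∫_{-R}^{R} ( S(x,y)² + Ĩ(x,y) · D(x,y) ) dx dy = 2√(2/π) · R - (2/√π) · R · erf(2R) - (1/2) erf(√2 · R) + (1/4) erf(√2 · R)² + (1/π) (1 - e^{-4R²}). (The left-hand side is the number variance of the real eigenvalues of the infinite real Ginibre ensemble in the interval (-R, R), expressed through the limiting correlation kernel.) -/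

import Mathlib

open MeasureTheory Real Filter

/-- The error function `erf(x) = (2/√π) ∫₀^x e^(-t²) dt`. -/
noncomputable def erf (x : ℝ) : ℝ := (2 / Real.sqrt π) * ∫ t in (0:ℝ)..x, Real.exp (-t ^ 2)

/-- The limiting kernel `S(x,y) = (1/√(2π)) e^{-(x-y)²/2}` for real eigenvalues of the GinOE. -/
noncomputable def Skern (x y : ℝ) : ℝ := (1 / Real.sqrt (2 * π)) * Real.exp (-(x - y) ^ 2 / 2)

/-- `D(x,y) = -((x-y)/√(2π)) e^{-(x-y)²/2}`. -/
noncomputable def Dkern (x y : ℝ) : ℝ := -((x - y) / Real.sqrt (2 * π)) * Real.exp (-(x - y) ^ 2 / 2)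

/-- `Ĩ(x,y) = -(1/2) erf((x-y)/√2) + (1/2) sgn(x-y)`. -/
noncomputable def Ikern (x y : ℝ) : ℝ :=
  -(1 / 2) * erf ((x - y) / Real.sqrt 2) + (1 / 2) * Real.sign (x - y)

/-!
Both `S(x,y)²` and `Ĩ(x,y) D(x,y)` depend only on `u = x - y`, and their sum is the even function
`f(u) = e^{-u²}/(2π) + (u erf(u/√2) - |u|) e^{-u²/2} / (2√(2π))`. For an even continuous `f`, the
double integral of `f(x - y)` over `[-R, R]²` is `2 ∫₀^{2R} (2R - u) f(u) du`
`= 2 (F(2R) - F(0) - 2R F'(0))` for any second antiderivative `F` of `f` on `[0, ∞)`. There the `|u|`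
is just `u`, and `F` is elementary in `erf u`, `u erf u + e^{-u²}/√π`, `erf(u/√2)` and `erf(u/√2)²`.
-/

theorem integral_integral_comp_sub_of_even {f F F' : ℝ → ℝ} (hf : Continuous f)
    (heven : ∀ u, f (-u) = f u) (hF' : ∀ u, 0 ≤ u → HasDerivAt F' (f u) u)
    (hF : ∀ u, 0 ≤ u → HasDerivAt F (F' u) u) {R : ℝ} (hR : 0 ≤ R) :
    ∫ x in (-R)..R, ∫ y in (-R)..R, f (x - y) = 2 * (F (2 * R) - F 0 - 2 * R * F' 0) := by
  set G : ℝ → ℝ := fun u => ∫ t in (0:ℝ)..u, f t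
  have hfi : ∀ a b : ℝ, IntervalIntegrable f volume a b := fun a b => hf.intervalIntegrable a b
  have inner : ∀ x, ∫ y in (-R)..R, f (x - y) = G (x + R) - G (x - R) := fun x => by
    rw [intervalIntegral.integral_comp_sub_left, sub_neg_eq_add,
      intervalIntegral.integral_interval_sub_left (hfi _ _) (hfi _ _)]
  have G_neg : ∀ u, G (-u) = -G u := fun u => by
    have h := intervalIntegral.integral_comp_neg (a := 0) (b := u) f
    simp only [heven, neg_zero] at h
    show ∫ t in (0:ℝ)..-u, f t = -∫ t in (0:ℝ)..u, f t
    rw [intervalIntegral.integral_symm, h]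
  have G_of_nonneg : ∀ u, 0 ≤ u → G u = F' u - F' 0 := fun u hu =>
    intervalIntegral.integral_eq_sub_of_hasDerivAt
      (fun t ht => hF' t (by rw [Set.uIcc_of_le hu] at ht; exact ht.1)) (hfi 0 u)
  have hG : Continuous G := intervalIntegral.continuous_primitive hfi 0
  -- on `[-R, R]` we have `x - R ≤ 0 ≤ x + R`, so oddness of `G` brings both arguments to `[0, 2R]`
  have outer_deriv : ∀ x ∈ Set.uIcc (-R) R,
      HasDerivAt (fun x => F (x + R) - F (R - x) - 2 * F' 0 * x) (G (x + R) - G (x - R)) x := by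
    intro x hx
    rw [Set.uIcc_of_le (by linarith)] at hx
    have h₁ := (hF (x + R) (by linarith [hx.1])).comp x ((hasDerivAt_id x).add_const R)
    have h₂ := (hF (R - x) (by linarith [hx.2])).comp x ((hasDerivAt_id x).const_sub R)
    have h₃ := (hasDerivAt_id x).const_mul (2 * F' 0)
    refine ((h₁.sub h₂).sub h₃).congr_deriv ?_
    rw [← neg_sub R x, G_neg, G_of_nonneg _ (by linarith [hx.1]),
      G_of_nonneg _ (by linarith [hx.2])]
    ring
  simp only [inner]
  rw [intervalIntegral.integral_eq_sub_of_hasDerivAt outer_deriv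
    ((hG.comp (continuous_add_const R)).sub (hG.comp (continuous_sub_right R))
      |>.intervalIntegrable _ _)]
  ring_nf

theorem Real.sign_mul_self_eq_abs (r : ℝ) : Real.sign r * r = |r| := by
  rcases lt_trichotomy r 0 with h | rfl | h
  · rw [Real.sign_of_neg h, abs_of_neg h, neg_one_mul]
  · simp
  · rw [Real.sign_of_pos h, abs_of_pos h, one_mul]

theorem inv_sqrt_sq {x : ℝ} (hx : 0 ≤ x) : (√x)⁻¹ ^ 2 = x⁻¹ := by
  rw [inv_pow, sq_sqrt hx]

theorem exp_neg_sq_eq_exp_neg_half_sq (u : ℝ) : exp (-u ^ 2) = exp (-u ^ 2 / 2) ^ 2 := by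
  rw [← exp_nat_mul]
  ring_nf

theorem hasDerivAt_erf (x : ℝ) : HasDerivAt erf (2 / √π * exp (-x ^ 2)) x :=
  ((by fun_prop : Continuous fun t : ℝ => exp (-t ^ 2)).integral_hasStrictDerivAt 0 x)
    |>.hasDerivAt.const_mul _

theorem continuous_erf : Continuous erf :=
  continuous_iff_continuousAt.2 fun x => (hasDerivAt_erf x).continuousAt

@[simp]
theorem erf_zero : erf 0 = 0 := by simp [erf]

theorem erf_neg (x : ℝ) : erf (-x) = -erf x := by
  have h := intervalIntegral.integral_comp_neg (a := 0) (b := x) fun t => exp (-t ^ 2)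
  simp only [neg_sq, neg_zero] at h
  rw [erf, erf, intervalIntegral.integral_symm, ← h, mul_neg]

theorem hasDerivAt_erf_div_sqrt_two (x : ℝ) :
    HasDerivAt (fun u => erf (u / √2)) (2 / √(2 * π) * exp (-x ^ 2 / 2)) x := by
  refine ((hasDerivAt_erf _).comp x ((hasDerivAt_id x).div_const √2)).congr_deriv ?_
  rw [div_pow, sq_sqrt zero_le_two, sqrt_mul zero_le_two, neg_div]
  field_simp
  simp

noncomputable def erfAntideriv (x : ℝ) : ℝ := x * erf x + exp (-x ^ 2) / √π

theorem hasDerivAt_erfAntideriv (x : ℝ) : HasDerivAt erfAntideriv (erf x) x := by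
  have h := ((hasDerivAt_id x).mul (hasDerivAt_erf x)).add
    (((hasDerivAt_pow 2 x).neg.exp).div_const √π)
  refine h.congr_deriv ?_
  simp only [one_mul, id_eq, Pi.neg_apply, Nat.cast_ofNat, Nat.add_one_sub_one, pow_one, mul_neg]
  ring

noncomputable def kernelProfile (u : ℝ) : ℝ :=
  exp (-u ^ 2) / (2 * π) + (u * erf (u / √2) - |u|) * exp (-u ^ 2 / 2) / (2 * √(2 * π))

theorem Skern_sq_add_Ikern_mul_Dkern (x y : ℝ) :
    Skern x y ^ 2 + Ikern x y * Dkern x y = kernelProfile (x - y) := by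
  rw [Skern, Ikern, Dkern, kernelProfile, exp_neg_sq_eq_exp_neg_half_sq,
    ← Real.sign_mul_self_eq_abs (x - y)]
  linear_combination exp (-(x - y) ^ 2 / 2) ^ 2 * inv_sqrt_sq two_pi_pos.le

theorem kernelProfile_neg (u : ℝ) : kernelProfile (-u) = kernelProfile u := by
  simp only [kernelProfile, neg_sq, abs_neg, neg_div, erf_neg]
  ring

theorem continuous_kernelProfile : Continuous kernelProfile := by
  have := continuous_erf
  unfold kernelProfile
  fun_prop

noncomputable def kernelProfileAntideriv (u : ℝ) : ℝ :=
  erf u / (2 * √π) + (1 - erf (u / √2)) * exp (-u ^ 2 / 2) / (2 * √(2 * π))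

noncomputable def kernelProfileAntideriv₂ (u : ℝ) : ℝ :=
  erfAntideriv u / (2 * √π) + erf (u / √2) / 4 - erf (u / √2) ^ 2 / 8

theorem hasDerivAt_kernelProfileAntideriv {u : ℝ} (hu : 0 ≤ u) :
    HasDerivAt kernelProfileAntideriv (kernelProfile u) u := by
  have h := ((hasDerivAt_erf u).div_const (2 * √π)).add
    (((hasDerivAt_erf_div_sqrt_two u).const_sub 1).mul
      ((hasDerivAt_pow 2 u).neg.div_const 2).exp |>.div_const (2 * √(2 * π)))
  refine h.congr_deriv ?_
  rw [kernelProfile, abs_of_nonneg hu, exp_neg_sq_eq_exp_neg_half_sq]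
  simp only [Pi.neg_apply]
  linear_combination exp (-u ^ 2 / 2) ^ 2 * (inv_sqrt_sq pi_pos.le - inv_sqrt_sq two_pi_pos.le)

theorem hasDerivAt_kernelProfileAntideriv₂ (u : ℝ) :
    HasDerivAt kernelProfileAntideriv₂ (kernelProfileAntideriv u) u := by
  have h := (((hasDerivAt_erfAntideriv u).div_const (2 * √π)).add
    ((hasDerivAt_erf_div_sqrt_two u).div_const 4)).sub
    (((hasDerivAt_erf_div_sqrt_two u).pow 2).div_const 8)
  refine h.congr_deriv ?_
  rw [kernelProfileAntideriv]
  field_simp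
  ring

theorem kernelProfileAntideriv_zero : kernelProfileAntideriv 0 = 1 / (2 * √(2 * π)) := by
  simp [kernelProfileAntideriv]

theorem kernelProfileAntideriv₂_zero : kernelProfileAntideriv₂ 0 = 1 / (2 * π) := by
  simp only [kernelProfileAntideriv₂, erfAntideriv, zero_div, erf_zero, zero_mul, zero_add,
    zero_pow two_ne_zero, neg_zero, exp_zero]
  linear_combination inv_sqrt_sq pi_pos.le / 2

theorem number_variance_real_eigenvalues_GinOE_origin (R : ℝ) (hR : 0 ≤ R) :
    Real.sqrt (2 / π) * R
      - ∫ x in (-R)..R, ∫ y in (-R)..R, (Skern x y ^ 2 + Ikern x y * Dkern x y)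
      = 2 * Real.sqrt (2 / π) * R - (2 / Real.sqrt π) * R * erf (2 * R)
        - (1 / 2) * erf (Real.sqrt 2 * R) + (1 / 4) * erf (Real.sqrt 2 * R) ^ 2
        + (1 / π) * (1 - Real.exp (-4 * R ^ 2)) := by
  simp only [Skern_sq_add_Ikern_mul_Dkern]
  rw [integral_integral_comp_sub_of_even continuous_kernelProfile kernelProfile_neg
    (fun u hu => hasDerivAt_kernelProfileAntideriv hu)
    (fun u _ => hasDerivAt_kernelProfileAntideriv₂ u) hR,
    kernelProfileAntideriv_zero, kernelProfileAntideriv₂_zero]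
  have h_arg : 2 * R / √2 = √2 * R := by
    rw [div_eq_iff (by positivity)]
    linear_combination -R * sq_sqrt zero_le_two
  have h_sqrt : √(2 / π) = 2 / √(2 * π) := by
    rw [sqrt_div zero_le_two, sqrt_mul zero_le_two, ← div_div, div_sqrt]
  rw [kernelProfileAntideriv₂, erfAntideriv, h_arg, h_sqrt,
    show -(2 * R) ^ 2 = -4 * R ^ 2 by ring]
  linear_combination -exp (-4 * R ^ 2) * inv_sqrt_sq pi_pos.le
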